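/- If A is a BCK-algebra of order n with k commuting pairs, then Iséki's extension A⊕⊤ has exactly k+3 commuting pairs; in particular its commuting degree is (k+3)/(n+1)². Consequently, for each n ≥ 3 there is a BCK-algebra of order n with commuting degree (3n−2)/n², the minimum possible among BCK-algebras of order n. -/
import Mathlib


/-- A BCK-algebra: an algebra ⟨A; ·, 0⟩ satisfying (BCK1)–(BCK5). -/
class BCK (A : Type*) extends Zero A where
  op : A → A → A
  bck1 : ∀ x y z : A, op (op (op x y) (op x z)) (op z y) = 0
  bck2 : ∀ x y : A, op (op x (op x y)) y = 0
  bck3 : ∀ x : A, op x x = 0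
  bck4 : ∀ x : A, op 0 x = 0
  bck5 : ∀ x y : A, op x y = 0 → op y x = 0 → x = y
/-- The number of commuting pairs of a finite BCK-algebra. -/
noncomputable def commPairs (A : Type*) [BCK A] : ℕ :=
  Nat.card {p : A × A // BCK.op p.2 (BCK.op p.2 p.1) = BCK.op p.1 (BCK.op p.1 p.2)}

/-- The commuting degree of a finite BCK-algebra. -/
noncomputable def commDeg (A : Type*) [BCK A] [Fintype A] : ℚ :=
  (commPairs A : ℚ) / (Fintype.card A : ℚ) ^ 2

set_option linter.unnecessarySeqFocus false

namespace BCKaux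

open BCK

lemma op_zero_iff {A : Type*} [BCK A] (a : A) : BCK.op a 0 = 0 ↔ a = 0 := by
  constructor
  · intro h; exact BCK.bck5 a 0 h (BCK.bck4 a)
  · rintro rfl; exact BCK.bck3 0

/-- auxiliary: op applied to a type on Option -/
def extOp {A : Type*} [BCK A] : Option A → Option A → Option A
  | _, none => some 0
  | none, some _ => none
  | some a, some b => some (BCK.op a b)

instance extZero {A : Type*} [BCK A] : Zero (Option A) := ⟨some 0⟩

lemma extZero_def {A : Type*} [BCK A] : (0 : Option A) = some 0 := rfl

def extBCK (A : Type*) [BCK A] : BCK (Option A) where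
  op := extOp
  bck1 := by
    rintro (_|x) (_|y) (_|z) <;>
      simp only [extOp, extZero_def, BCK.bck3, BCK.bck4, Option.some.injEq] <;>
      first
      | rfl
      | (simp [BCK.bck3, BCK.bck4, BCK.bck1])
  bck2 := by
    rintro (_|x) (_|y) <;>
      simp [extOp, extZero_def, BCK.bck3, BCK.bck4, BCK.bck2]
  bck3 := by rintro (_|x) <;> simp [extOp, extZero_def, BCK.bck3]
  bck4 := by rintro (_|x) <;> simp [extOp, extZero_def, BCK.bck4]
  bck5 := by
    rintro (_|x) (_|y) h1 h2
    · rfl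
    · exact absurd h1 (by simp [extOp, extZero_def])
    · exact absurd h2 (by simp [extOp, extZero_def])
    · simp only [extOp, extZero_def, Option.some.injEq] at h1 h2 ⊢
      exact BCK.bck5 x y h1 h2

end BCKaux

namespace BCKaux

lemma nat_card_subtype {α : Type*} [Fintype α] (P : α → Prop) [DecidablePred P] :
    Nat.card {x // P x} = (Finset.univ.filter P).card := by
  rw [Nat.card_eq_fintype_card, Fintype.card_subtype]

lemma count_ext (A : Type*) [BCK A] [Fintype A] (e : Option A → Option A → Option A)
    (h1 : ∀ x : Option A, e x none = some 0)
    (h2 : ∀ a : A, e none (some a) = none)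
    (h3 : ∀ a b : A, e (some a) (some b) = some (BCK.op a b)) :
    Nat.card {p : Option A × Option A //
        e p.2 (e p.2 p.1) = e p.1 (e p.1 p.2)} = commPairs A + 3 := by
  classical
  set Q : Option A × Option A → Prop :=
    fun p => e p.2 (e p.2 p.1) = e p.1 (e p.1 p.2) with hQ
  set P : A × A → Prop :=
    fun p => BCK.op p.2 (BCK.op p.2 p.1) = BCK.op p.1 (BCK.op p.1 p.2) with hP
  have key : (Finset.univ.filter Q)
      = (Finset.univ.filter P).image (fun p : A × A => ((some p.1 : Option A), (some p.2 : Option A)))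
        ∪ {((some 0 : Option A), (none : Option A)), (none, some 0), (none, none)} := by
    ext p
    obtain ⟨(_|a), (_|b)⟩ := p <;>
      simp only [Finset.mem_filter, Finset.mem_union, Finset.mem_image, Finset.mem_insert,
        Finset.mem_singleton, Finset.mem_univ, true_and, Prod.mk.injEq, Prod.ext_iff, hQ, hP]
    · simp [h1, h2]
    · rw [h2 b, h1 none, h1 (some b), h3 b 0]
      simp only [Option.some.injEq, op_zero_iff, eq_comm (a := (0:A))]
      simp [op_zero_iff, BCK.bck3, eq_comm]
    · rw [h1 (some a), h2 a, h1 none, h3 a 0]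
      simp only [Option.some.injEq]
      rw [eq_comm, op_zero_iff]
      simp [eq_comm]
    · rw [h3 b a, h3 a b, h3 b _, h3 a _]
      simp only [Option.some.injEq]
      constructor
      · intro h
        exact Or.inl ⟨⟨a, b⟩, h, rfl, rfl⟩
      · rintro (⟨⟨c, d⟩, hq, hc, hd⟩ | ⟨hc, hd⟩ | ⟨hc, hd⟩ | ⟨hc, hd⟩)
        · obtain rfl : c = a := hc
          obtain rfl : d = b := hd
          exact hq
        · cases hd
        · cases hc
        · cases hc
  have hinj : Function.Injective
      (fun p : A × A => ((some p.1 : Option A), (some p.2 : Option A))) := by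
    rintro ⟨a, b⟩ ⟨c, d⟩ h
    simp only [Prod.mk.injEq, Option.some.injEq] at h
    exact Prod.ext h.1 h.2
  have hdisj : Disjoint
      ((Finset.univ.filter P).image (fun p : A × A => ((some p.1 : Option A), (some p.2 : Option A))))
      ({((some 0 : Option A), (none : Option A)), (none, some 0), (none, none)} : Finset _) := by
    rw [Finset.disjoint_right]
    intro p hp hq
    simp only [Finset.mem_insert, Finset.mem_singleton] at hp
    simp only [Finset.mem_image] at hq
    obtain ⟨q, -, hq⟩ := hq
    rcases hp with rfl | rfl | rfl <;> simp [Prod.ext_iff] at hq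
  have hcard3 : ({((some 0 : Option A), (none : Option A)), (none, some 0), (none, none)}
      : Finset (Option A × Option A)).card = 3 := by
    rw [Finset.card_insert_of_notMem (by simp), Finset.card_insert_of_notMem (by simp),
      Finset.card_singleton]
  have hcp : commPairs A = (Finset.univ.filter P).card := nat_card_subtype P
  rw [show {p : Option A × Option A // e p.2 (e p.2 p.1) = e p.1 (e p.1 p.2)}
      = {p : Option A × Option A // Q p} from rfl, nat_card_subtype Q, key,
    Finset.card_union_of_disjoint hdisj, Finset.card_image_of_injective _ hinj, hcard3, hcp]

end BCKaux

namespace BCKaux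

lemma extOp_none_right {A : Type*} [BCK A] (x : Option A) : extOp x none = some 0 := by
  cases x <;> rfl

lemma op_op_zero {A : Type*} [BCK A] (x : A) : BCK.op x (BCK.op x 0) = 0 :=
  (op_zero_iff _).1 (BCK.bck2 x 0)

lemma commPairs_ext (A : Type*) [BCK A] [Fintype A] :
    @commPairs (Option A) (extBCK A) = commPairs A + 3 :=
  count_ext A extOp extOp_none_right (fun _ => rfl) (fun _ _ => rfl)

instance : BCK PUnit where
  zero := PUnit.unit
  op _ _ := PUnit.unit
  bck1 _ _ _ := rfl
  bck2 _ _ := rfl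
  bck3 _ := rfl
  bck4 _ := rfl
  bck5 _ _ _ _ := rfl

lemma commPairs_punit : commPairs PUnit = 1 := by
  exact Nat.card_eq_one_iff_unique.2 ⟨inferInstance, ⟨⟨(PUnit.unit, PUnit.unit), rfl⟩⟩⟩

def T : ℕ → Type
  | 0 => PUnit
  | n+1 => Option (T n)

def bckT : (n : ℕ) → BCK (T n)
  | 0 => inferInstanceAs (BCK PUnit)
  | n+1 => @extBCK (T n) (bckT n)

def finT : (n : ℕ) → Fintype (T n)
  | 0 => inferInstanceAs (Fintype PUnit)
  | n+1 => @instFintypeOption (T n) (finT n)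

lemma card_T : ∀ n : ℕ, @Fintype.card (T n) (finT n) = n + 1
  | 0 => rfl
  | n+1 => by
    show @Fintype.card (Option (T n)) (@instFintypeOption _ (finT n)) = n + 2
    rw [@Fintype.card_option _ (finT n), card_T n]

lemma commPairs_T : ∀ n : ℕ, @commPairs (T n) (bckT n) = 3 * n + 1
  | 0 => commPairs_punit
  | n+1 => by
    show @commPairs (Option (T n)) (@extBCK _ (bckT n)) = 3 * (n + 1) + 1
    rw [@commPairs_ext (T n) (bckT n) (finT n), commPairs_T n]
    ring

lemma lower_bound (A : Type*) [BCK A] [Fintype A] :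
    3 * Fintype.card A - 2 ≤ commPairs A := by
  classical
  set P : A × A → Prop :=
    fun p => BCK.op p.2 (BCK.op p.2 p.1) = BCK.op p.1 (BCK.op p.1 p.2) with hP
  set s : Finset (A × A) := Finset.univ.image (fun x : A => (x, (0 : A))) with hs
  set t : Finset (A × A) := Finset.univ.image (fun x : A => ((0 : A), x)) with ht
  set u : Finset (A × A) := Finset.univ.image (fun x : A => (x, x)) with hu
  have hn : 1 ≤ Fintype.card A := @Fintype.card_pos _ _ ⟨0⟩
  have hsub : s ∪ t ∪ u ⊆ Finset.univ.filter P := by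
    intro p hp
    simp only [hs, ht, hu, Finset.mem_union, Finset.mem_image, Finset.mem_univ, true_and] at hp
    rw [Finset.mem_filter]
    refine ⟨Finset.mem_univ _, ?_⟩
    rcases hp with (⟨x, rfl⟩ | ⟨x, rfl⟩) | ⟨x, rfl⟩ <;>
      simp [hP, BCK.bck4, op_op_zero]
  have hcs : s.card = Fintype.card A :=
    Finset.card_image_of_injective _ (fun a b h => (Prod.ext_iff.1 h).1) |>.trans
      Finset.card_univ
  have hct : t.card = Fintype.card A :=
    Finset.card_image_of_injective _ (fun a b h => (Prod.ext_iff.1 h).2) |>.trans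
      Finset.card_univ
  have hcu : u.card = Fintype.card A :=
    Finset.card_image_of_injective _ (fun a b h => (Prod.ext_iff.1 h).1) |>.trans
      Finset.card_univ
  have hst : s ∩ t = {((0 : A), (0 : A))} := by
    ext ⟨x, y⟩
    simp only [hs, ht, Finset.mem_inter, Finset.mem_image, Finset.mem_univ, true_and,
      Finset.mem_singleton, Prod.mk.injEq, Prod.ext_iff]
    aesop
  have hstu : (s ∪ t) ∩ u = {((0 : A), (0 : A))} := by
    ext ⟨x, y⟩
    simp only [hs, ht, hu, Finset.mem_inter, Finset.mem_union, Finset.mem_image,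
      Finset.mem_univ, true_and, Finset.mem_singleton, Prod.mk.injEq, Prod.ext_iff]
    aesop
  have h1 := Finset.card_union_add_card_inter s t
  have h2 := Finset.card_union_add_card_inter (s ∪ t) u
  rw [hst, Finset.card_singleton] at h1
  rw [hstu, Finset.card_singleton] at h2
  have hle : (s ∪ t ∪ u).card ≤ (Finset.univ.filter P).card := Finset.card_le_card hsub
  have hcp : commPairs A = (Finset.univ.filter P).card := nat_card_subtype P
  omega

end BCKaux

/-- If A is a BCK-algebra of order n with k commuting pairs, then Iséki's
extension A⊕⊤ (modelled on `Option A` with ⊤ = `none`) has exactly k + 3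
commuting pairs, so its commuting degree is (k+3)/(n+1)².  Consequently, for
each n ≥ 3 there is a BCK-algebra of order n with commuting degree (3n−2)/n²,
and this is the minimum commuting degree among BCK-algebras of order n. -/
theorem stmt_17 :
    (∀ (A : Type) [BCK A] [Fintype A] (n k : ℕ), Fintype.card A = n →
      commPairs A = k →
      ∀ e : Option A → Option A → Option A,
        (∀ x : Option A, e x none = some 0) →
        (∀ a : A, e none (some a) = none) →
        (∀ a b : A, e (some a) (some b) = some (BCK.op a b)) →
        (Nat.card {p : Option A × Option A //
            e p.2 (e p.2 p.1) = e p.1 (e p.1 p.2)} = k + 3 ∧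
          (Nat.card {p : Option A × Option A //
              e p.2 (e p.2 p.1) = e p.1 (e p.1 p.2)} : ℚ) / ((n : ℚ) + 1) ^ 2
            = ((k : ℚ) + 3) / ((n : ℚ) + 1) ^ 2)) ∧
    (∀ n : ℕ, 3 ≤ n →
      (∃ (A : Type) (_ : BCK A) (_ : Fintype A),
        Fintype.card A = n ∧ commDeg A = (3 * (n : ℚ) - 2) / (n : ℚ) ^ 2) ∧
      (∀ (A : Type) [BCK A] [Fintype A], Fintype.card A = n →
        (3 * (n : ℚ) - 2) / (n : ℚ) ^ 2 ≤ commDeg A)) := by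
  constructor
  · intro A _ _ n k hn hk e he1 he2 he3
    have h := BCKaux.count_ext A e he1 he2 he3
    rw [hk] at h
    refine ⟨h, by rw [h]; push_cast; ring_nf⟩
  · intro n hn
    obtain ⟨m, rfl⟩ : ∃ m, n = m + 1 := ⟨n - 1, by omega⟩
    constructor
    · refine ⟨BCKaux.T m, BCKaux.bckT m, BCKaux.finT m, BCKaux.card_T m, ?_⟩
      unfold commDeg
      rw [BCKaux.commPairs_T m, BCKaux.card_T m]
      push_cast
      ring_nf
    · intro A _ _ hcard
      have h := BCKaux.lower_bound A
      rw [hcard] at h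
      unfold commDeg
      rw [hcard]
      have h2 : (3 * ((m : ℚ) + 1) - 2) ≤ (commPairs A : ℚ) := by
        have e1 : ((3 * (m + 1) - 2 : ℕ) : ℚ) = 3 * ((m : ℚ) + 1) - 2 := by
          have h3 : (2 : ℕ) ≤ 3 * (m + 1) := by omega
          push_cast [h3]
          ring
        rw [← e1]
        exact_mod_cast h
      push_cast
      gcongr
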